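/- arXiv:2509.01777 — 3 statements merged into one kernel-verified Lean document; each statement's English description precedes it below -/
import Mathlib

section
/- Affine form of Farkas' lemma: suppose the polyhedron {x : Ax ≤ b} is nonempty. Then the implication 'Ax ≤ b implies Ex ≤ F' holds for all x if and only if there exists a matrix P with nonnegative entries such that PA = E and Pb ≤ F. -/
/-!
Row by row, it suffices to show that if `c ⬝ᵥ x ≤ d` holds on the nonempty polyhedron `A x ≤ b`,
then `(c, d)` is a nonnegative combination of the rows `(A i, b i)` and of `(0, 1)`. Nonemptiness
makes the homogenized implication `A x ≤ τ • b, 0 ≤ τ ⟹ c ⬝ᵥ x ≤ τ * d` hold (for `τ = 0` by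
following a ray of the polyhedron), and this is homogeneous Farkas. That in turn is the separation
of a point from a closed convex cone: a finitely generated cone is closed because, by the conic
Carathéodory argument, it is a finite union of images of orthants under injective linear maps.
-/

open Matrix

section Caratheodory

variable {ι 𝕜 E : Type*} [Fintype ι] [Field 𝕜] [LinearOrder 𝕜] [IsStrictOrderedRing 𝕜]
  [AddCommGroup E] [Module 𝕜 E] {v : ι → E}

theorem exists_nonneg_apply_eq_zero_linearCombination_eq (hv : ¬LinearIndependent 𝕜 v) {y : ι → 𝕜}
    (hy : 0 ≤ y) : ∃ y' : ι → 𝕜, 0 ≤ y' ∧ (∃ j, y' j = 0) ∧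
      Fintype.linearCombination 𝕜 v y' = Fintype.linearCombination 𝕜 v y := by
  obtain ⟨c, hc, j, hj⟩ : ∃ c, Fintype.linearCombination 𝕜 v c = 0 ∧ ∃ j, 0 < c j := by
    obtain ⟨c, hc, j, hj⟩ := Fintype.not_linearIndependent_iff.mp hv
    rw [← Fintype.linearCombination_apply] at hc
    rcases hj.lt_or_gt with hj | hj
    · exact ⟨-c, by rw [map_neg, hc, neg_zero], j, neg_pos.mpr hj⟩
    · exact ⟨c, hc, j, hj⟩
  -- the largest `r` keeping `y - r • c` nonnegative is the minimal ratio `y i / c i` over `c i > 0`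
  obtain ⟨j₀, hj₀, hmin⟩ := Finset.exists_min_image {i | 0 < c i} (fun i => y i / c i)
    ⟨j, by simpa using hj⟩
  simp only [Finset.mem_filter, Finset.mem_univ, true_and] at hj₀ hmin
  set r := y j₀ / c j₀
  have hr : 0 ≤ r := div_nonneg (hy j₀) hj₀.le
  refine ⟨y - r • c, fun i => ?_, ⟨j₀, ?_⟩, by rw [map_sub, map_smul, hc, smul_zero, sub_zero]⟩
  · have hyi : 0 ≤ y i := hy i
    simp only [Pi.zero_apply, Pi.sub_apply, Pi.smul_apply, smul_eq_mul, sub_nonneg]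
    rcases le_or_gt (c i) 0 with hci | hci
    · nlinarith
    · simpa only [le_div_iff₀ hci] using hmin i hci
  · simp [r, hj₀.ne']

theorem linearCombination_image_Ici_eq_iUnion [DecidableEq ι] (hv : ¬LinearIndependent 𝕜 v) :
    Fintype.linearCombination 𝕜 v '' Set.Ici 0 =
      ⋃ j, Fintype.linearCombination 𝕜 (fun i : {i // i ≠ j} => v i.1) '' Set.Ici 0 := by
  ext x
  simp only [Set.mem_image, Set.mem_Ici, Set.mem_iUnion, Fintype.linearCombination_apply]
  constructor
  · rintro ⟨y, hy, rfl⟩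
    obtain ⟨y', hy', ⟨j, hj⟩, hsum⟩ := exists_nonneg_apply_eq_zero_linearCombination_eq hv hy
    simp only [Fintype.linearCombination_apply] at hsum
    refine ⟨j, fun i => y' i, fun i => hy' i, ?_⟩
    rw [← hsum, Fintype.sum_eq_add_sum_subtype_ne _ j, hj, zero_smul, zero_add]
  · rintro ⟨j, z, hz, rfl⟩
    refine ⟨fun i => if h : i = j then 0 else z ⟨i, h⟩, fun i => ?_, ?_⟩
    · by_cases h : i = j
      · simp [h]
      · simpa [h] using hz ⟨i, h⟩
    · rw [Fintype.sum_eq_add_sum_subtype_ne _ j]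
      simp only [dif_pos, zero_smul, zero_add]
      exact Finset.sum_congr rfl fun i _ => by rw [dif_neg i.2]

end Caratheodory

section Cone

variable {ι E : Type*} [Fintype ι] [NormedAddCommGroup E] [NormedSpace ℝ E]

theorem isClosed_linearCombination_image_Ici_of_linearIndependent {v : ι → E}
    (hv : LinearIndependent ℝ v) : IsClosed (Fintype.linearCombination ℝ v '' Set.Ici 0) :=
  (LinearMap.isClosedEmbedding_of_injective (LinearMap.ker_eq_bot.mpr
    (linearIndependent_iff_injective_fintypeLinearCombination.mp hv))).isClosedMap _ isClosed_Ici

theorem isClosed_linearCombination_image_Ici (v : ι → E) :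
    IsClosed (Fintype.linearCombination ℝ v '' Set.Ici 0) := by
  classical
  induction h : Fintype.card ι using Nat.strong_induction_on generalizing ι with
  | _ n ih =>
    by_cases hv : LinearIndependent ℝ v
    · exact isClosed_linearCombination_image_Ici_of_linearIndependent hv
    rw [linearCombination_image_Ici_eq_iUnion hv]
    refine isClosed_iUnion_of_finite fun j => ih _ ?_ _ rfl
    have : 0 < Fintype.card ι := Fintype.card_pos_iff.mpr ⟨j⟩
    simp only [ne_eq, Fintype.card_subtype_compl, Fintype.card_unique]
    omega

theorem exists_strongDual_nonneg_of_notMem_linearCombination_image_Ici {v : ι → E} {z : E}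
    (hz : z ∉ Fintype.linearCombination ℝ v '' Set.Ici 0) :
    ∃ f : StrongDual ℝ E, (∀ i, 0 ≤ f (v i)) ∧ f z < 0 := by
  classical
  let C : ProperCone ℝ E :=
    ⟨(PointedCone.positive ℝ (ι → ℝ)).map (Fintype.linearCombination ℝ v),
      isClosed_linearCombination_image_Ici v⟩
  obtain ⟨f, hf, hfz⟩ := C.hyperplane_separation_point (x₀ := z) hz
  refine ⟨f, fun i => hf _ ⟨Pi.single i 1, ?_, ?_⟩, hfz⟩
  · exact Pi.single_nonneg.mpr zero_le_one
  · simp [Fintype.linearCombination_apply_single]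

end Cone


section Affine

variable {m n 𝕜 : Type*} [Fintype n] [Field 𝕜] [LinearOrder 𝕜]
  [IsStrictOrderedRing 𝕜] {A : Matrix m n 𝕜} {b : m → 𝕜} {c : n → 𝕜} {d : 𝕜}

theorem dotProduct_nonpos_of_mulVec_nonpos (hne : ∃ x, A *ᵥ x ≤ b)
    (h : ∀ x, A *ᵥ x ≤ b → c ⬝ᵥ x ≤ d) {u : n → 𝕜} (hu : A *ᵥ u ≤ 0) : c ⬝ᵥ u ≤ 0 := by
  obtain ⟨x₀, hx₀⟩ := hne
  by_contra! hcu
  -- moving from `x₀` along `u` stays feasible but eventually pushes `c ⬝ᵥ x` past `d`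
  set μ := (d - c ⬝ᵥ x₀ + 1) / (c ⬝ᵥ u)
  have hμ : 0 ≤ μ := div_nonneg (by linarith [h x₀ hx₀]) hcu.le
  have hfeas : A *ᵥ (x₀ + μ • u) ≤ b := by
    rw [mulVec_add, mulVec_smul]
    simpa using add_le_add hx₀ (smul_nonpos_of_nonneg_of_nonpos hμ hu)
  have := h _ hfeas
  rw [dotProduct_add, dotProduct_smul, smul_eq_mul, div_mul_cancel₀ _ hcu.ne'] at this
  linarith

theorem dotProduct_le_mul_of_mulVec_le_smul (hne : ∃ x, A *ᵥ x ≤ b)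
    (h : ∀ x, A *ᵥ x ≤ b → c ⬝ᵥ x ≤ d) {x : n → 𝕜} {τ : 𝕜} (hτ : 0 ≤ τ)
    (hx : A *ᵥ x ≤ τ • b) : c ⬝ᵥ x ≤ τ * d := by
  rcases hτ.eq_or_lt with rfl | hτ
  · rw [zero_smul] at hx
    simpa using dotProduct_nonpos_of_mulVec_nonpos hne h hx
  · have := h (τ⁻¹ • x) (by
      rw [mulVec_smul, ← inv_smul_smul₀ hτ.ne' b]
      exact smul_le_smul_of_nonneg_left hx (inv_nonneg.mpr hτ.le))
    rwa [dotProduct_smul, smul_eq_mul, inv_mul_le_iff₀ hτ] at this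

end Affine

section Farkas

variable {m n : Type*} [Fintype m] [Fintype n]

theorem exists_nonneg_vecMul_eq_of_forall_mulVec_nonneg (M : Matrix m n ℝ) (c : n → ℝ)
    (h : ∀ x, 0 ≤ M *ᵥ x → 0 ≤ c ⬝ᵥ x) : ∃ y, 0 ≤ y ∧ y ᵥ* M = c := by
  classical
  by_contra! hc
  obtain ⟨f, hfM, hfc⟩ : ∃ f : StrongDual ℝ (n → ℝ), (∀ i, 0 ≤ f (M i)) ∧ f c < 0 := by
    refine exists_strongDual_nonneg_of_notMem_linearCombination_image_Ici ?_
    rintro ⟨y, hy, hyc⟩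
    exact hc y hy <|
      (vecMul_eq_sum y M).trans ((Fintype.linearCombination_apply ℝ M y).symm.trans hyc)
  set x : n → ℝ := fun j => f (Pi.single j 1)
  have hf : ∀ w, f w = w ⬝ᵥ x := fun w => by
    conv_lhs => rw [pi_eq_sum_univ' w]
    simp [dotProduct, x]
  refine hfc.not_ge ?_
  rw [hf]
  exact h x fun i => by simpa [mulVec, hf] using hfM i

theorem exists_nonneg_vecMul_eq_dotProduct_le {A : Matrix m n ℝ} {b : m → ℝ} {c : n → ℝ} {d : ℝ}
    (hne : ∃ x, A *ᵥ x ≤ b) (h : ∀ x, A *ᵥ x ≤ b → c ⬝ᵥ x ≤ d) :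
    ∃ y, 0 ≤ y ∧ y ᵥ* A = c ∧ y ⬝ᵥ b ≤ d := by
  -- homogenize: `(x, τ) ↦ (τ • b - A *ᵥ x, τ)` is nonnegative only if `τ * d - c ⬝ᵥ x` is
  obtain ⟨y, hy, hyM⟩ := exists_nonneg_vecMul_eq_of_forall_mulVec_nonneg
    (fromBlocks (-A) (replicateCol Unit b) (0 : Matrix Unit n ℝ) 1) (Sum.elim (-c) fun _ => d)
    fun z hz => by
      obtain ⟨x, τ, rfl⟩ : ∃ x τ, z = Sum.elim x fun _ => τ :=
        ⟨z ∘ Sum.inl, z (.inr ()), by ext (i | i) <;> rfl⟩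
      have hb : replicateCol Unit b *ᵥ (fun _ => τ) = τ • b := by
        ext; simp [mulVec, dotProduct, mul_comm]
      simp only [fromBlocks_mulVec, Sum.elim_comp_inl, Sum.elim_comp_inr, hb, zero_mulVec,
        one_mulVec, zero_add, neg_mulVec, neg_add_eq_sub, Sum.nonneg_elim_iff, sub_nonneg] at hz
      have hτ : 0 ≤ τ := hz.2 ()
      have hd : (fun _ : Unit => d) ⬝ᵥ (fun _ => τ) = τ * d := by simp [dotProduct, mul_comm]
      rw [sumElim_dotProduct_sumElim, neg_dotProduct, hd]
      linarith [dotProduct_le_mul_of_mulVec_le_smul hne h hτ hz.1]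
  obtain ⟨y, s, rfl⟩ : ∃ y₁ s, y = Sum.elim y₁ fun _ => s :=
    ⟨y ∘ Sum.inl, y (.inr ()), by ext (i | i) <;> rfl⟩
  simp only [vecMul_fromBlocks, Sum.elim_comp_inl, Sum.elim_comp_inr, vecMul_zero, add_zero,
    vecMul_neg, mulVec_replicateCol_eq_const, vecMul_one] at hyM
  have hA : y ᵥ* A = c := by simpa using congrArg (· ∘ Sum.inl) hyM
  have hd : y ⬝ᵥ b + s = d := by simpa using congrFun hyM (.inr ())
  have hs : 0 ≤ s := hy (.inr ())
  exact ⟨y, fun i => hy (.inl i), hA, by linarith⟩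

end Farkas

theorem mulVec_le_mulVec_of_nonneg {R m n : Type*} [Semiring R] [PartialOrder R]
    [IsOrderedRing R] [Fintype n] {P : Matrix m n R} (hP : ∀ i j, 0 ≤ P i j) {u v : n → R}
    (huv : u ≤ v) : P *ᵥ u ≤ P *ᵥ v :=
  fun i => dotProduct_le_dotProduct_of_nonneg_left huv (hP i)

/-- Affine form of Farkas' lemma. -/
theorem farkas_affine (p q n : ℕ) (A : Matrix (Fin p) (Fin n) ℝ) (b : Fin p → ℝ)
    (E : Matrix (Fin q) (Fin n) ℝ) (F : Fin q → ℝ)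
    (hne : ∃ x : Fin n → ℝ, A.mulVec x ≤ b) :
    (∀ x : Fin n → ℝ, A.mulVec x ≤ b → E.mulVec x ≤ F) ↔
      ∃ P : Matrix (Fin q) (Fin p) ℝ,
        (∀ i j, 0 ≤ P i j) ∧ P * A = E ∧ P.mulVec b ≤ F := by
  constructor
  · intro h
    choose y hy hyA hyb using fun i =>
      exists_nonneg_vecMul_eq_dotProduct_le (c := E i) (d := F i) hne fun x hx => h x hx i
    exact ⟨Matrix.of y, fun i => hy i, funext hyA, hyb⟩
  · rintro ⟨P, hP, rfl, hPb⟩ x hx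
    rw [← mulVec_mulVec]
    exact (mulVec_le_mulVec_of_nonneg hP hx).trans hPb
end

section
/- For continuous closed-loop dynamics and a closed specification, the supremum in the definition of resilience is attained: if the set E = {ε ≥ 0 : all ε-disturbed trajectories lie in ψ} is nonempty and bounded, then sup E ∈ E. -/
/-!
A disturbance `d` bounded by `sSup E` is the limit of its rescalings `c • d`, `c → 1⁻`, which are
bounded by `c * sSup E < sSup E` and hence by some element of `E`. The trajectory depends
continuously on the disturbance and `ψ` is closed, so the trajectory of `d` lies in `ψ` as well.
-/

/-- Trajectory of the closed-loop system `x(k+1) = F(x(k)) + d(k)` from `x0`. -/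
def traj {n : ℕ} (F : (Fin n → ℝ) → Fin n → ℝ) (x0 : Fin n → ℝ)
    (d : ℕ → Fin n → ℝ) : ℕ → Fin n → ℝ
  | 0 => x0
  | k + 1 => F (traj F x0 d k) + d k

open Set Filter Topology

theorem IsClosed.mem_of_forall_smul_mem {X : Type*} [TopologicalSpace X] [MulAction ℝ X]
    [ContinuousSMul ℝ X] {K : Set X} (hK : IsClosed K) {x : X}
    (h : ∀ c ∈ Ioo (0 : ℝ) 1, c • x ∈ K) : x ∈ K := by
  have hcont : Continuous fun c : ℝ => c • x := continuous_id.smul continuous_const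
  have hlim : Tendsto (fun c : ℝ => c • x) (𝓝[<] 1) (𝓝 x) := by
    simpa only [one_smul] using (hcont.tendsto 1).mono_left nhdsWithin_le_nhds
  exact hK.mem_of_tendsto hlim (mem_of_superset (Ioo_mem_nhdsLT one_pos) h)

section Resilience

variable {n N : ℕ} {F : (Fin n → ℝ) → Fin n → ℝ} {x0 : Fin n → ℝ}
  {ψ : Set (Fin (N + 1) → Fin n → ℝ)} {δ ε s : ℝ}

theorem continuous_traj (hF : Continuous F) (x0 : Fin n → ℝ) (k : ℕ) :
    Continuous fun d : ℕ → Fin n → ℝ => traj F x0 d k := by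
  induction k with
  | zero => exact continuous_const
  | succ k ih => exact (hF.comp ih).add (continuous_apply k)

variable (F x0 ψ) in
def Resilient (ε : ℝ) : Prop :=
  ∀ d : ℕ → Fin n → ℝ, (∀ k, ‖d k‖ ≤ ε) → (fun i : Fin (N + 1) => traj F x0 d i) ∈ ψ

theorem Resilient.mono (h : Resilient F x0 ψ ε) (hδε : δ ≤ ε) : Resilient F x0 ψ δ :=
  fun d hd => h d fun k => (hd k).trans hδε

theorem Resilient.of_forall_lt (hF : Continuous F) (hψ : IsClosed ψ) (hs : 0 < s)
    (h : ∀ ε < s, Resilient F x0 ψ ε) : Resilient F x0 ψ s := by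
  intro d hd
  have hclosed : IsClosed {d : ℕ → Fin n → ℝ | (fun i : Fin (N + 1) => traj F x0 d i) ∈ ψ} :=
    hψ.preimage (continuous_pi fun i : Fin (N + 1) => continuous_traj hF x0 i)
  refine hclosed.mem_of_forall_smul_mem fun c hc => h (c * s) (mul_lt_of_lt_one_left hs hc.2) _
    fun k => ?_
  rw [Pi.smul_apply, norm_smul, Real.norm_of_nonneg hc.1.le]
  exact mul_le_mul_of_nonneg_left (hd k) hc.1.le

end Resilience

/-- For a continuous closed-loop map and a closed specification, the supremum in the
definition of resilience is attained. -/
theorem resilience_sup_attained (n N : ℕ) (F : (Fin n → ℝ) → Fin n → ℝ)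
    (hF : Continuous F) (x0 : Fin n → ℝ)
    (ψ : Set (Fin (N + 1) → Fin n → ℝ)) (hψ : IsClosed ψ)
    (E : Set ℝ)
    (hE : E = {ε : ℝ | 0 ≤ ε ∧ ∀ d : ℕ → Fin n → ℝ, (∀ k, ‖d k‖ ≤ ε) →
      (fun i : Fin (N + 1) => traj F x0 d (i : ℕ)) ∈ ψ})
    (hne : E.Nonempty) (hbdd : BddAbove E) :
    sSup E ∈ E := by
  have hmem : ∀ ε, ε ∈ E ↔ 0 ≤ ε ∧ Resilient F x0 ψ ε := by
    subst hE
    exact fun _ => Iff.rfl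
  obtain ⟨ε0, hε0⟩ := hne
  obtain ⟨hε0_nonneg, hε0_res⟩ := (hmem ε0).1 hε0
  have hε0_le : ε0 ≤ sSup E := le_csSup hbdd hε0
  refine (hmem _).2 ⟨hε0_nonneg.trans hε0_le, ?_⟩
  rcases hε0_le.eq_or_lt with heq | hlt
  · exact heq ▸ hε0_res
  · refine Resilient.of_forall_lt hF hψ (hε0_nonneg.trans_lt hlt) fun ε hε => ?_
    obtain ⟨e, he, hεe⟩ := exists_lt_of_lt_csSup ⟨ε0, hε0⟩ hε
    exact ((hmem e).1 he).2.mono hεe.le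
end

section
/- For a linear controller (with parameters α₁, α₂), a polytopic specification and an initial state x: whenever there exists a nonnegative matrix P with P A_b = E(α₁) and ε · P B_b ≤ F(x, α₁, α₂) (with A_b, B_b encoding the unit infinity-ball), then for every disturbance sequence d_0,...,d_{N-1} with ‖d_i‖_∞ ≤ ε the closed-loop trajectory satisfies G_k x(k) ≤ H_k for all k = 0,...,N. -/
open Matrix Finset

private lemma mulVec_sum_aux {α ι n' m' : Type*} [NonUnitalNonAssocSemiring α] [Fintype n']
    (M : Matrix m' n' α) (s : Finset ι) (f : ι → n' → α) :
    M.mulVec (∑ i ∈ s, f i) = ∑ i ∈ s, M.mulVec (f i) := by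
  ext x
  simp [Matrix.mulVec, dotProduct, Finset.mul_sum, Finset.sum_apply]
  rw [Finset.sum_comm]

private lemma mulVec_mono_aux {m' n' : Type*} [Fintype n'] (M : Matrix m' n' ℝ)
    (hM : ∀ i j, 0 ≤ M i j) {u v : n' → ℝ} (huv : u ≤ v) :
    M.mulVec u ≤ M.mulVec v := by
  intro i
  refine Finset.sum_le_sum fun j _ => ?_
  exact mul_le_mul_of_nonneg_left (huv j) (hM i j)



/-- Soundness direction of Theorem 1: if there exists a nonnegative certificate matrix
`P` with `P A_b = E(α₁)` and `ε · (P B_b) ≤ F(x, α₁, α₂)` (where `A_b = [I; -I]`,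
`B_b = 𝟙` encode the unit sup-norm ball of the stacked normalized disturbance),
then for every disturbance sequence bounded by `ε` in the sup norm, the closed-loop
trajectory of `x(k+1) = A x(k) + B(α₁ x(k) + α₂) + d(k)` satisfies the polytopic
specification `G_k x(k) ≤ H_k` for all `k = 0, …, N`. -/
theorem certificate_implies_robust_satisfaction (n m q N : ℕ)
    (A : Matrix (Fin n) (Fin n) ℝ) (B : Matrix (Fin n) (Fin m) ℝ)
    (α₁ : Matrix (Fin m) (Fin n) ℝ) (α₂ : Fin m → ℝ) (x0 : Fin n → ℝ)
    (G : Fin (N + 1) → Matrix (Fin q) (Fin n) ℝ) (H : Fin (N + 1) → Fin q → ℝ)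
    (ε : ℝ) (hε : 0 ≤ ε)
    -- the block matrix E(α₁) acting on the stacked disturbance Y = (1/ε)(0, d₀, …, d_{N-1})
    (E : Matrix (Fin (N + 1) × Fin q) (Fin (N + 1) × Fin n) ℝ)
    (hE : ∀ k : Fin (N + 1), ∀ r : Fin q, ∀ i : Fin (N + 1), ∀ c : Fin n,
      E (k, r) (i, c) =
        if 1 ≤ (i : ℕ) ∧ (i : ℕ) ≤ (k : ℕ)
        then (G k * (A + B * α₁) ^ ((k : ℕ) - (i : ℕ))) r c else 0)
    -- the stacked right-hand side F(x, α₁, α₂)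
    (F : Fin (N + 1) × Fin q → ℝ)
    (hF : ∀ k : Fin (N + 1), ∀ r : Fin q,
      F (k, r) = H k r - (G k).mulVec (((A + B * α₁) ^ (k : ℕ)).mulVec x0) r
        - (G k).mulVec
            ((∑ i ∈ Finset.range (k : ℕ), (A + B * α₁) ^ i).mulVec (B.mulVec α₂)) r)
    -- the unit sup-norm ball polytope A_b Y ≤ B_b with A_b = [I; -I], B_b = 𝟙
    (Ab : Matrix ((Fin (N + 1) × Fin n) ⊕ (Fin (N + 1) × Fin n))
      (Fin (N + 1) × Fin n) ℝ)
    (hAb : Ab = Matrix.fromRows 1 (-1))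
    (Bb : (Fin (N + 1) × Fin n) ⊕ (Fin (N + 1) × Fin n) → ℝ)
    (hBb : Bb = fun _ => 1)
    -- the nonnegative Farkas certificate
    (hP : ∃ P : Matrix (Fin (N + 1) × Fin q)
        ((Fin (N + 1) × Fin n) ⊕ (Fin (N + 1) × Fin n)) ℝ,
      (∀ i j, 0 ≤ P i j) ∧ P * Ab = E ∧ ε • P.mulVec Bb ≤ F) :
    ∀ d : ℕ → Fin n → ℝ, (∀ i < N, ‖d i‖ ≤ ε) →
      ∀ z : ℕ → Fin n → ℝ, z 0 = x0 →
        (∀ k, z (k + 1) = A.mulVec (z k) + B.mulVec (α₁.mulVec (z k) + α₂) + d k) →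
        ∀ k : Fin (N + 1), (G k).mulVec (z (k : ℕ)) ≤ H k := by
  intro d hd z hz0 hzrec k
  obtain ⟨P, hPpos, hPA, hPB⟩ := hP
  set Abar := A + B * α₁ with hAbar
  -- closed-form trajectory
  have traj : ∀ j : ℕ, z j = (Abar ^ j).mulVec x0
      + (∑ i ∈ range j, Abar ^ i).mulVec (B.mulVec α₂)
      + ∑ i ∈ range j, (Abar ^ (j - 1 - i)).mulVec (d i) := by
    intro j
    induction j with
    | zero => simp [hz0]
    | succ j ih =>
      have step : z (j + 1) = Abar.mulVec (z j) + B.mulVec α₂ + d j := by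
        rw [hzrec j, hAbar, Matrix.add_mulVec, Matrix.mulVec_add, ← Matrix.mulVec_mulVec]
        abel
      have h2 : (Abar * ∑ i ∈ range j, Abar ^ i).mulVec (B.mulVec α₂) + B.mulVec α₂
          = (∑ i ∈ range (j + 1), Abar ^ i).mulVec (B.mulVec α₂) := by
        rw [Finset.sum_range_succ', Matrix.add_mulVec, Finset.mul_sum]
        simp [pow_succ']
      have h3 : Abar.mulVec (∑ i ∈ range j, (Abar ^ (j - 1 - i)).mulVec (d i)) + d j
          = ∑ i ∈ range (j + 1), (Abar ^ (j + 1 - 1 - i)).mulVec (d i) := by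
        rw [mulVec_sum_aux, Finset.sum_range_succ]
        simp only [Nat.add_sub_cancel, Nat.sub_self, pow_zero, Matrix.one_mulVec]
        congr 1
        refine Finset.sum_congr rfl fun i hi => ?_
        have hij := Finset.mem_range.mp hi
        have he : j - 1 - i + 1 = j - i := by omega
        rw [Matrix.mulVec_mulVec, ← pow_succ', he]
      calc z (j + 1) = Abar.mulVec (z j) + B.mulVec α₂ + d j := step
        _ = (Abar ^ (j + 1)).mulVec x0
            + ((Abar * ∑ i ∈ range j, Abar ^ i).mulVec (B.mulVec α₂) + B.mulVec α₂)
            + (Abar.mulVec (∑ i ∈ range j, (Abar ^ (j - 1 - i)).mulVec (d i)) + d j) := by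
            rw [ih, Matrix.mulVec_add, Matrix.mulVec_add, Matrix.mulVec_mulVec,
              Matrix.mulVec_mulVec, ← pow_succ']
            abel
        _ = _ := by rw [h2, h3]
  -- stacked disturbance
  set D : Fin (N + 1) × Fin n → ℝ :=
    fun p => if 1 ≤ (p.1 : ℕ) then d ((p.1 : ℕ) - 1) p.2 else 0 with hD
  have hDbound : ∀ p : Fin (N + 1) × Fin n, |D p| ≤ ε := by
    intro ⟨i, c⟩
    by_cases h : 1 ≤ (i : ℕ)
    · simp only [hD, if_pos h]
      have hiN : (i : ℕ) - 1 < N := by have := i.isLt; omega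
      calc |d ((i : ℕ) - 1) c| ≤ ‖d ((i : ℕ) - 1)‖ := by
            simpa using norm_le_pi_norm (d ((i : ℕ) - 1)) c
        _ ≤ ε := hd _ hiN
    · simp [hD, h, hε]
  have hAbD : Ab.mulVec D ≤ fun _ => ε := by
    rw [hAb, Matrix.fromRows_mulVec]
    intro j
    cases j with
    | inl p => simpa using (abs_le.mp (hDbound p)).2
    | inr p =>
      simp only [Sum.elim_inr, Matrix.neg_mulVec, Pi.neg_apply, Matrix.one_mulVec]
      linarith [(abs_le.mp (hDbound p)).1]
  have hED : E.mulVec D ≤ F := by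
    rw [← hPA, ← Matrix.mulVec_mulVec]
    calc P.mulVec (Ab.mulVec D) ≤ P.mulVec (fun _ => ε) := mulVec_mono_aux P hPpos hAbD
      _ = ε • P.mulVec Bb := by
          rw [hBb, show (fun _ => ε : _ → ℝ) = ε • (fun _ => (1:ℝ)) by ext; simp,
            Matrix.mulVec_smul]
      _ ≤ F := hPB
  intro r
  -- the disturbance part of the trajectory, seen through G k, equals (E *ᵥ D) (k, r)
  have hkN : (k : ℕ) ≤ N := Nat.lt_succ_iff.mp k.isLt
  have hEDk : E.mulVec D (k, r)
      = ∑ i ∈ range (k : ℕ), ((G k * Abar ^ ((k : ℕ) - 1 - i)).mulVec (d i)) r := by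
    have inner : ∀ i : Fin (N + 1),
        (∑ c : Fin n, E (k, r) (i, c) * D (i, c))
        = if 1 ≤ (i : ℕ) ∧ (i : ℕ) ≤ (k : ℕ)
          then ((G k * Abar ^ ((k : ℕ) - (i : ℕ))).mulVec (d ((i : ℕ) - 1))) r else 0 := by
      intro i
      by_cases h : 1 ≤ (i : ℕ) ∧ (i : ℕ) ≤ (k : ℕ)
      · rw [if_pos h]
        have hc : ∀ c : Fin n, E (k, r) (i, c) * D (i, c)
            = (G k * Abar ^ ((k : ℕ) - (i : ℕ))) r c * d ((i : ℕ) - 1) c := by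
          intro c
          rw [hE, if_pos h]
          simp [hD, h.1]
        simp only [hc]
        rfl
      · rw [if_neg h]
        refine Finset.sum_eq_zero fun c _ => ?_
        rw [hE, if_neg h, zero_mul]
    calc E.mulVec D (k, r) = ∑ p : Fin (N + 1) × Fin n, E (k, r) p * D p := rfl
      _ = ∑ i : Fin (N + 1), ∑ c : Fin n, E (k, r) (i, c) * D (i, c) :=
          Fintype.sum_prod_type ..
      _ = ∑ i : Fin (N + 1), if 1 ≤ (i : ℕ) ∧ (i : ℕ) ≤ (k : ℕ)
            then ((G k * Abar ^ ((k : ℕ) - (i : ℕ))).mulVec (d ((i : ℕ) - 1))) r else 0 :=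
          Finset.sum_congr rfl fun i _ => inner i
      _ = ∑ i ∈ range (N + 1), if 1 ≤ i ∧ i ≤ (k : ℕ)
            then ((G k * Abar ^ ((k : ℕ) - i)).mulVec (d (i - 1))) r else 0 :=
          Fin.sum_univ_eq_sum_range
            (fun i => if 1 ≤ i ∧ i ≤ (k : ℕ)
              then ((G k * Abar ^ ((k : ℕ) - i)).mulVec (d (i - 1))) r else 0) (N + 1)
      _ = ∑ i ∈ (range (N + 1)).filter (fun i => 1 ≤ i ∧ i ≤ (k : ℕ)),
            ((G k * Abar ^ ((k : ℕ) - i)).mulVec (d (i - 1))) r := (Finset.sum_filter _ _).symm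
      _ = ∑ i ∈ Finset.Ico 1 ((k : ℕ) + 1),
            ((G k * Abar ^ ((k : ℕ) - i)).mulVec (d (i - 1))) r := by
          congr 1
          ext i
          simp only [Finset.mem_filter, Finset.mem_range, Finset.mem_Ico]
          omega
      _ = ∑ i ∈ range (k : ℕ),
            ((G k * Abar ^ ((k : ℕ) - (1 + i))).mulVec (d (1 + i - 1))) r := by
          rw [Finset.sum_Ico_eq_sum_range]
          simp
      _ = _ := by
          refine Finset.sum_congr rfl fun i _ => ?_
          have h1 : (k : ℕ) - (1 + i) = (k : ℕ) - 1 - i := by omega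
          have h2 : 1 + i - 1 = i := by omega
          rw [h1, h2]
  have hmain : (G k).mulVec (z (k : ℕ)) r
      = (G k).mulVec ((Abar ^ (k : ℕ)).mulVec x0) r
        + (G k).mulVec ((∑ i ∈ range (k : ℕ), Abar ^ i).mulVec (B.mulVec α₂)) r
        + E.mulVec D (k, r) := by
    rw [traj (k : ℕ), Matrix.mulVec_add, Matrix.mulVec_add, mulVec_sum_aux, hEDk]
    simp only [Pi.add_apply, Finset.sum_apply]
    congr 1
    refine Finset.sum_congr rfl fun i _ => ?_
    rw [Matrix.mulVec_mulVec]
  have hFk := hF k r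
  have hEDF := hED (k, r)
  rw [hmain]
  linarith
end
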